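/- arXiv:2404.00713 — 5 statements merged into one kernel-verified Lean document; each statement's English description precedes it below -/
import Mathlib

section
/- Let ρ > 0, α > 0, and x = αe ∈ ℝⁿ where e is the all-ones vector. Then prox_{(1/ρ)h₂}(x) = {αe} if ρα² > 2; prox_{(1/ρ)h₂}(x) = {0} ∪ {α‖w‖₁ w : w ∈ S^{n-1}_+} if ρα² = 2; and prox_{(1/ρ)h₂}(x) = {0} if ρα² < 2. -/
/-- The ℓ₁ norm on `ℝⁿ`. -/
noncomputable def l1norm {n : ℕ} (x : Fin n → ℝ) : ℝ := ∑ i, |x i|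

/-- The ℓ₂ norm on `ℝⁿ`. -/
noncomputable def l2norm {n : ℕ} (x : Fin n → ℝ) : ℝ := Real.sqrt (∑ i, (x i) ^ 2)

-- `h₂(x) = (‖x‖₁/‖x‖₂)²` for `x ≠ 0`, and `h₂(0) = 0`.
open Classical in
noncomputable def h2 {n : ℕ} (x : Fin n → ℝ) : ℝ :=
  if x = 0 then 0 else (l1norm x / l2norm x) ^ 2

/-- `prox_{(1/ρ) f}(z)`: the set of global minimizers of `(ρ/2)‖u - z‖₂² + f(u)`. -/
noncomputable def proxSet {n : ℕ} (ρ : ℝ) (f : (Fin n → ℝ) → ℝ) (z : Fin n → ℝ) :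
    Set (Fin n → ℝ) :=
  {u | ∀ v : Fin n → ℝ,
    ρ / 2 * (∑ i, (u i - z i) ^ 2) + f u ≤ ρ / 2 * (∑ i, (v i - z i) ^ 2) + f v}

/-! With `Q = ∑ uᵢ²`, `T = ∑ uᵢ`, `S = ∑ |uᵢ|` and `c = ρα²/2`, the prox objective `Φ` centred
at `αe` is `Φ u = ρ/2 (Q - 2αT + nα²) + S²/Q`, and clearing the denominator gives, for `u ≠ 0`,

  `Q (Φ u - Φ 0) = ρ/2 (Q - αT)² + (S² - T²) + (1 - c) T²`,
  `Q (Φ u - n)   = ρ/2 (Q - αT)² + (S² - T²) + (c - 1) (nQ - T²)`,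

where `Φ 0 = c n` and `Φ (αe) = n`. As `T² ≤ S²` and `T² ≤ nQ`, every term on the right is
nonnegative when `c ≤ 1` (first identity) or `c ≥ 1` (second identity), so `0`, resp. `αe`, is a
minimizer, and the other minimizers are the `u` at which all terms vanish. For `c < 1` this forces
`T = 0` and then `Q = 0`; for `c = 1` it says `Q = αT` and `u ≥ 0`, which is `u = α‖w‖₁ w` for
`w = u / ‖u‖₂`; for `c > 1` it gives `Q = αT` and `T² = nQ`, whence `‖u - αe‖² = 0`. -/

open Finset

section Sums

variable {ι : Type*} [Fintype ι]

lemma sum_sq_eq_zero_iff {u : ι → ℝ} : ∑ i, u i ^ 2 = 0 ↔ u = 0 := by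
  simp only [sq, sum_mul_self_eq_zero_iff, mem_univ, true_implies, funext_iff, Pi.zero_apply]

lemma sum_sq_pos {u : ι → ℝ} (hu : u ≠ 0) : 0 < ∑ i, u i ^ 2 :=
  (sum_nonneg fun i _ => sq_nonneg (u i)).lt_of_ne' (sum_sq_eq_zero_iff.not.mpr hu)

lemma sq_sum_le_sq_sum_abs (u : ι → ℝ) : (∑ i, u i) ^ 2 ≤ (∑ i, |u i|) ^ 2 := by
  rw [← sq_abs]
  exact pow_le_pow_left₀ (abs_nonneg _) (abs_sum_le_sum_abs _ _) 2

lemma sum_abs_eq_sum_iff {u : ι → ℝ} : ∑ i, |u i| = ∑ i, u i ↔ ∀ i, 0 ≤ u i := by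
  rw [eq_comm, sum_eq_sum_iff_of_le fun i _ => le_abs_self (u i)]
  simp only [mem_univ, true_implies, eq_comm (a := u _), abs_eq_self]

lemma sum_sub_const_sq (u : ι → ℝ) (a : ℝ) :
    ∑ i, (u i - a) ^ 2 = ∑ i, u i ^ 2 - 2 * a * ∑ i, u i + Fintype.card ι * a ^ 2 := by
  simp only [sub_sq, sum_add_distrib, sum_sub_distrib, ← sum_mul, sum_const, card_univ,
    nsmul_eq_mul]
  rw [← mul_sum]
  ring

end Sums

-- Also at `u = 0`, through `0 / 0 = 0`.
lemma h2_eq_div {n : ℕ} (u : Fin n → ℝ) : h2 u = (∑ i, |u i|) ^ 2 / ∑ i, u i ^ 2 := by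
  unfold h2
  split_ifs with hu
  · simp [hu]
  · rw [l1norm, l2norm, div_pow, Real.sq_sqrt (sum_nonneg fun i _ => sq_nonneg (u i))]

noncomputable def proxObjective {n : ℕ} (ρ : ℝ) (f : (Fin n → ℝ) → ℝ) (z u : Fin n → ℝ) : ℝ :=
  ρ / 2 * ∑ i, (u i - z i) ^ 2 + f u

lemma proxSet_eq_setOf_le {n : ℕ} {ρ : ℝ} {f : (Fin n → ℝ) → ℝ} {z u₀ : Fin n → ℝ}
    (h : ∀ v, proxObjective ρ f z u₀ ≤ proxObjective ρ f z v) :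
    proxSet ρ f z = {u | proxObjective ρ f z u ≤ proxObjective ρ f z u₀} := by
  ext u
  exact ⟨fun hu => hu u₀, fun hu v => hu.trans (h v)⟩

lemma proxSet_eq_singleton {n : ℕ} {ρ : ℝ} {f : (Fin n → ℝ) → ℝ} {z u₀ : Fin n → ℝ}
    (h : ∀ v, proxObjective ρ f z u₀ ≤ proxObjective ρ f z v)
    (huniq : ∀ u, proxObjective ρ f z u ≤ proxObjective ρ f z u₀ → u = u₀) :
    proxSet ρ f z = {u₀} := by
  rw [proxSet_eq_setOf_le h]
  ext u
  refine ⟨huniq u, ?_⟩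
  rintro rfl
  exact le_refl (proxObjective ρ f z u)

section ConstantCenter

variable {n : ℕ} {ρ α : ℝ}

local notation "Φ" => proxObjective ρ h2 (fun _ : Fin n => α)

lemma proxObjective_h2_const_eq (u : Fin n → ℝ) :
    Φ u = ρ / 2 * (∑ i, u i ^ 2 - 2 * α * ∑ i, u i + n * α ^ 2)
      + (∑ i, |u i|) ^ 2 / ∑ i, u i ^ 2 := by
  rw [proxObjective, h2_eq_div, sum_sub_const_sq, Fintype.card_fin]

lemma proxObjective_h2_const_zero : Φ 0 = ρ / 2 * (n * α ^ 2) := by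
  simp [proxObjective_h2_const_eq]

lemma proxObjective_h2_const_self (hα : α ≠ 0) : Φ (fun _ => α) = n := by
  rcases eq_or_ne (n : ℝ) 0 with hn | hn
  · simp [proxObjective_h2_const_eq, hn]
  · simp only [proxObjective_h2_const_eq, sum_const, card_univ, Fintype.card_fin, nsmul_eq_mul]
    field_simp
    rw [sq_abs]
    ring

lemma mul_proxObjective_h2_const_sub_zero {u : Fin n → ℝ} (hu : u ≠ 0) :
    (∑ i, u i ^ 2) * (Φ u - Φ 0) =
      ρ / 2 * (∑ i, u i ^ 2 - α * ∑ i, u i) ^ 2 + ((∑ i, |u i|) ^ 2 - (∑ i, u i) ^ 2)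
        + (1 - ρ * α ^ 2 / 2) * (∑ i, u i) ^ 2 := by
  have hQ := (sum_sq_pos hu).ne'
  rw [proxObjective_h2_const_eq, proxObjective_h2_const_zero]
  field_simp
  ring

lemma mul_proxObjective_h2_const_sub_card {u : Fin n → ℝ} (hu : u ≠ 0) :
    (∑ i, u i ^ 2) * (Φ u - n) =
      ρ / 2 * (∑ i, u i ^ 2 - α * ∑ i, u i) ^ 2 + ((∑ i, |u i|) ^ 2 - (∑ i, u i) ^ 2)
        + (ρ * α ^ 2 / 2 - 1) * (n * ∑ i, u i ^ 2 - (∑ i, u i) ^ 2) := by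
  have hQ := (sum_sq_pos hu).ne'
  rw [proxObjective_h2_const_eq]
  field_simp
  ring

lemma proxObjective_h2_const_zero_le (hρ : 0 ≤ ρ) (hc : ρ * α ^ 2 ≤ 2) (v : Fin n → ℝ) :
    Φ 0 ≤ Φ v := by
  rcases eq_or_ne v 0 with rfl | hv
  · exact le_rfl
  rw [← sub_nonneg, ← mul_nonneg_iff_of_pos_left (sum_sq_pos hv),
    mul_proxObjective_h2_const_sub_zero hv]
  have := sq_sum_le_sq_sum_abs v
  have : 0 ≤ 1 - ρ * α ^ 2 / 2 := by linarith
  positivity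

lemma eq_zero_of_proxObjective_h2_const_le_zero (hρ : 0 < ρ) (hc : ρ * α ^ 2 < 2)
    {u : Fin n → ℝ} (hu : Φ u ≤ Φ 0) : u = 0 := by
  by_contra hu0
  have hQ := sum_sq_pos hu0
  rw [← sub_nonpos, ← mul_le_mul_iff_right₀ hQ, mul_zero,
    mul_proxObjective_h2_const_sub_zero hu0] at hu
  have hS := sq_sum_le_sq_sum_abs u
  have hdist : 0 ≤ ρ / 2 * (∑ i, u i ^ 2 - α * ∑ i, u i) ^ 2 := by positivity
  have hT : (1 - ρ * α ^ 2 / 2) * (∑ i, u i) ^ 2 = 0 :=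
    le_antisymm (by linarith) (mul_nonneg (by linarith) (sq_nonneg _))
  rw [mul_eq_zero, pow_eq_zero_iff two_ne_zero] at hT
  rcases hT with hc' | hT
  · linarith
  rw [hT, mul_zero, sub_zero] at hu
  rw [hT] at hS
  have : 0 < ρ / 2 * (∑ i, u i ^ 2) ^ 2 := by positivity
  linarith

lemma proxObjective_h2_const_le_zero_iff (hρ : 0 < ρ) (hα : 0 < α) (hc : ρ * α ^ 2 = 2)
    (u : Fin n → ℝ) : Φ u ≤ Φ 0 ↔ (∀ i, 0 ≤ u i) ∧ ∑ i, u i ^ 2 = α * ∑ i, u i := by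
  rcases eq_or_ne u 0 with rfl | hu
  · simp
  have hQ := sum_sq_pos hu
  rw [← sub_nonpos, ← mul_le_mul_iff_right₀ hQ, mul_zero, mul_proxObjective_h2_const_sub_zero hu,
    show 1 - ρ * α ^ 2 / 2 = 0 by linarith, zero_mul, add_zero, ← sum_abs_eq_sum_iff]
  have hS := sq_sum_le_sq_sum_abs u
  have hdist : 0 ≤ ρ / 2 * (∑ i, u i ^ 2 - α * ∑ i, u i) ^ 2 := by positivity
  constructor
  · intro h
    have hS' : (∑ i, |u i|) ^ 2 = (∑ i, u i) ^ 2 := by linarith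
    have hdist0 : ρ / 2 * (∑ i, u i ^ 2 - α * ∑ i, u i) ^ 2 = 0 := by linarith
    rw [mul_eq_zero, pow_eq_zero_iff two_ne_zero, sub_eq_zero] at hdist0
    have heq := hdist0.resolve_left (by positivity)
    have hT : 0 ≤ ∑ i, u i := nonneg_of_mul_nonneg_right (heq ▸ hQ.le) hα
    exact ⟨(sq_eq_sq₀ (sum_nonneg fun i _ => abs_nonneg _) hT).mp hS', heq⟩
  · rintro ⟨hS', heq⟩
    rw [hS', heq]
    simp

lemma proxObjective_h2_const_self_le (hρ : 0 ≤ ρ) (hα : α ≠ 0) (hc : 2 ≤ ρ * α ^ 2)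
    (v : Fin n → ℝ) : Φ (fun _ => α) ≤ Φ v := by
  rw [proxObjective_h2_const_self hα]
  rcases eq_or_ne v 0 with rfl | hv
  · rw [proxObjective_h2_const_zero]
    nlinarith [(Nat.cast_nonneg n : (0 : ℝ) ≤ n)]
  rw [← sub_nonneg, ← mul_nonneg_iff_of_pos_left (sum_sq_pos hv),
    mul_proxObjective_h2_const_sub_card hv]
  have := sq_sum_le_sq_sum_abs v
  have : (∑ i, v i) ^ 2 ≤ n * ∑ i, v i ^ 2 := by
    simpa using sq_sum_le_card_mul_sum_sq (s := univ) (f := v)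
  have : 0 ≤ (ρ * α ^ 2 / 2 - 1) * (n * ∑ i, v i ^ 2 - (∑ i, v i) ^ 2) :=
    mul_nonneg (by linarith) (by linarith)
  positivity

lemma eq_const_of_proxObjective_h2_const_le_self (hρ : 0 < ρ) (hα : α ≠ 0)
    (hc : 2 < ρ * α ^ 2) {u : Fin n → ℝ} (hu : Φ u ≤ Φ (fun _ => α)) : u = fun _ => α := by
  rw [proxObjective_h2_const_self hα] at hu
  rcases eq_or_ne u 0 with rfl | hu0
  · rw [proxObjective_h2_const_zero] at hu
    obtain rfl : n = 0 := by
      have : (ρ * α ^ 2 / 2 - 1) * n ≤ 0 := by linarith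
      exact Nat.le_zero.mp (by exact_mod_cast nonpos_of_mul_nonpos_right this (by linarith))
    exact Subsingleton.elim _ _
  have hQ := sum_sq_pos hu0
  rw [← sub_nonpos, ← mul_le_mul_iff_right₀ hQ, mul_zero,
    mul_proxObjective_h2_const_sub_card hu0] at hu
  have hS := sq_sum_le_sq_sum_abs u
  have hCS : (∑ i, u i) ^ 2 ≤ n * ∑ i, u i ^ 2 := by
    simpa using sq_sum_le_card_mul_sum_sq (s := univ) (f := u)
  have hdist : 0 ≤ ρ / 2 * (∑ i, u i ^ 2 - α * ∑ i, u i) ^ 2 := by positivity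
  have hgap : 0 ≤ (ρ * α ^ 2 / 2 - 1) * (n * ∑ i, u i ^ 2 - (∑ i, u i) ^ 2) :=
    mul_nonneg (by linarith) (by linarith)
  have hdist0 : ρ / 2 * (∑ i, u i ^ 2 - α * ∑ i, u i) ^ 2 = 0 := by linarith
  have hgap0 : (ρ * α ^ 2 / 2 - 1) * (n * ∑ i, u i ^ 2 - (∑ i, u i) ^ 2) = 0 := by linarith
  rw [mul_eq_zero, pow_eq_zero_iff two_ne_zero, sub_eq_zero] at hdist0
  rw [mul_eq_zero, sub_eq_zero] at hgap0
  have hQT := hdist0.resolve_left (by positivity)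
  have hnQ := hgap0.resolve_left (by linarith)
  have hT : ∑ i, u i = n * α := by
    have hT0 : ∑ i, u i ≠ 0 := fun h => hQ.ne' (by rw [hQT, h, mul_zero])
    refine mul_right_cancel₀ hT0 ?_
    linear_combination (n : ℝ) * hQT - hnQ
  rw [← sub_eq_zero, ← sum_sq_eq_zero_iff]
  simp only [Pi.sub_apply]
  rw [sum_sub_const_sq, Fintype.card_fin, hQT, hT]
  ring

lemma setOf_nonneg_sum_sq_eq_mul_sum (hα : 0 ≤ α) :
    {u : Fin n → ℝ | (∀ i, 0 ≤ u i) ∧ ∑ i, u i ^ 2 = α * ∑ i, u i} =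
      {0} ∪ {u | ∃ w : Fin n → ℝ,
        (∑ i, (w i) ^ 2 = 1) ∧ (∀ i, 0 ≤ w i) ∧ u = (α * l1norm w) • w} := by
  ext u
  simp only [Set.mem_union, Set.mem_singleton_iff]
  constructor
  · rintro ⟨hnn, hQT⟩
    refine (eq_or_ne u 0).imp id fun hu => ?_
    have hQ := sum_sq_pos hu
    set r := √(∑ i, u i ^ 2)
    have hr : 0 < r := Real.sqrt_pos.mpr hQ
    have hr2 : r ^ 2 = ∑ i, u i ^ 2 := Real.sq_sqrt hQ.le
    refine ⟨r⁻¹ • u, ?_, fun i => mul_nonneg (inv_nonneg.mpr hr.le) (hnn i), ?_⟩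
    · simp only [Pi.smul_apply, smul_eq_mul, mul_pow, ← mul_sum, inv_pow, hr2]
      exact inv_mul_cancel₀ hQ.ne'
    · have hl1 : l1norm (r⁻¹ • u) = r⁻¹ * ∑ i, u i := by
        simp only [l1norm, Pi.smul_apply, smul_eq_mul, abs_mul, abs_inv, abs_of_pos hr,
          abs_of_nonneg (hnn _), ← mul_sum]
      have hcoef : α * (r⁻¹ * ∑ i, u i) * r⁻¹ = 1 := by
        field_simp
        rw [hr2, hQT]
      rw [hl1, smul_smul, hcoef, one_smul]
  · rintro (rfl | ⟨w, hw1, hw0, rfl⟩)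
    · simp
    have hl1 : l1norm w = ∑ i, w i := sum_congr rfl fun i _ => abs_of_nonneg (hw0 i)
    refine ⟨fun i => mul_nonneg (mul_nonneg hα (hl1 ▸ sum_nonneg fun i _ => hw0 i)) (hw0 i), ?_⟩
    simp only [Pi.smul_apply, smul_eq_mul, mul_pow, ← mul_sum, hw1, hl1]
    ring

end ConstantCenter

theorem stmt_4 {n : ℕ} (ρ α : ℝ) (hρ : 0 < ρ) (hα : 0 < α) :
    (2 < ρ * α ^ 2 → proxSet ρ h2 (fun _ : Fin n => α) = {fun _ => α}) ∧
    (ρ * α ^ 2 = 2 → proxSet ρ h2 (fun _ : Fin n => α) =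
      {0} ∪ {u | ∃ w : Fin n → ℝ,
        (∑ i, (w i) ^ 2 = 1) ∧ (∀ i, 0 ≤ w i) ∧ u = (α * l1norm w) • w}) ∧
    (ρ * α ^ 2 < 2 → proxSet ρ h2 (fun _ : Fin n => α) = {0}) := by
  refine ⟨fun hc => ?_, fun hc => ?_, fun hc => ?_⟩
  · exact proxSet_eq_singleton (proxObjective_h2_const_self_le hρ.le hα.ne' hc.le)
      fun _ => eq_const_of_proxObjective_h2_const_le_self hρ hα.ne' hc
  · rw [proxSet_eq_setOf_le (proxObjective_h2_const_zero_le hρ.le hc.le),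
      ← setOf_nonneg_sum_sq_eq_mul_sum hα.le]
    ext u
    exact proxObjective_h2_const_le_zero_iff hρ hα hc u
  · exact proxSet_eq_singleton (proxObjective_h2_const_zero_le hρ.le hc.le)
      fun _ => eq_zero_of_proxObjective_h2_const_le_zero hρ hc
end

section
/- Let ρ > 0 and let x ∈ ℝⁿ_↓ be nonzero. Then x₁ − α̲/(ρ‖x‖₁) ≥ 0, where α̲ = ((ρ/2)‖x‖₂² + n) − √Δ and Δ = ((ρ/2)‖x‖₂² + n)² − 2ρ‖x‖₁². Moreover, if x is not a scalar multiple of the all-ones vector e, then x₁ − α̲/(ρ‖x‖₁) > 0. -/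
/-!
Write `b = (ρ/2)‖x‖₂² + n` and `c = ρ‖x‖₁x₁`. The number `α̲ = b - √Δ` is the smaller root of
`α² - 2bα + 2ρ‖x‖₁²`, so `α̲ ≤ c` holds trivially when `c ≥ b`, and otherwise follows from
`(b - c)² ≤ Δ`. The key identity is
`Δ - (b - c)² = ρ‖x‖₁ · ∑ᵢ (x₁ - xᵢ)(2 - ρx₁xᵢ)`,
whose two factors are similarly ordered, so by Chebyshev's sum inequality the sum is at least
`(1/n) ∑ᵢ (x₁ - xᵢ) · ∑ᵢ (2 - ρx₁xᵢ)`; and `c < b` together with `‖x‖₂² ≤ x₁‖x‖₁` makes the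
second factor positive. For strictness, a non-constant `x` makes the first factor positive, and
`Δ > 0` by AM-GM (`b² ≥ 2ρn‖x‖₂²`) and the strict Cauchy–Schwarz inequality `‖x‖₁² < n‖x‖₂²`.
-/

open Finset

section Chebyshev

variable {ι α : Type*} [Fintype ι] [Semiring α] [LinearOrder α] [IsStrictOrderedRing α]
  [ExistsAddOfLE α]
  {f g : ι → α}

theorem Monovary.sum_mul_nonneg (hfg : Monovary f g) (hf : 0 ≤ ∑ i, f i) (hg : 0 ≤ ∑ i, g i) :
    0 ≤ ∑ i, f i * g i := by
  cases isEmpty_or_nonempty ι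
  · simp
  exact nonneg_of_mul_nonneg_right ((mul_nonneg hf hg).trans hfg.sum_mul_sum_le_card_mul_sum)
    (by simp [Fintype.card_pos])

theorem Monovary.sum_mul_pos (hfg : Monovary f g) (hf : 0 < ∑ i, f i) (hg : 0 < ∑ i, g i) :
    0 < ∑ i, f i * g i :=
  pos_of_mul_pos_right ((mul_pos hf hg).trans_le hfg.sum_mul_sum_le_card_mul_sum) (by positivity)

end Chebyshev

theorem sq_sum_lt_card_mul_sum_sq {ι : Type*} [Fintype ι] {x : ι → ℝ}
    (hx : ∀ c : ℝ, x ≠ fun _ => c) : (∑ i, x i) ^ 2 < Fintype.card ι * ∑ i, x i ^ 2 := by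
  have hN : (0 : ℝ) < Fintype.card ι := by
    obtain ⟨i, -⟩ := Function.ne_iff.mp (hx 0)
    exact Nat.cast_pos.mpr (Fintype.card_pos_iff.mpr ⟨i⟩)
  have hdev : ∑ i, ((Fintype.card ι : ℝ) * x i - ∑ j, x j) ^ 2
      = Fintype.card ι * (Fintype.card ι * ∑ i, x i ^ 2 - (∑ i, x i) ^ 2) := by
    simp only [sub_sq, mul_pow, sum_add_distrib, sum_sub_distrib, ← mul_sum, ← sum_mul,
      sum_const, card_univ, nsmul_eq_mul]
    ring
  have hpos : 0 < ∑ i, ((Fintype.card ι : ℝ) * x i - ∑ j, x j) ^ 2 := by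
    refine (sum_nonneg fun i _ => sq_nonneg _).lt_of_ne fun h0 =>
      hx ((∑ j, x j) / Fintype.card ι) ?_
    ext i
    have := (sum_eq_zero_iff_of_nonneg fun i _ => sq_nonneg _).mp h0.symm i (mem_univ i)
    rw [eq_div_iff hN.ne']
    linarith [pow_eq_zero_iff two_ne_zero |>.mp this]
  nlinarith

theorem sub_sqrt_le_of_sq_le {b c Δ : ℝ} (h : c < b → (b - c) ^ 2 ≤ Δ) : b - √Δ ≤ c := by
  rcases le_or_gt b c with hbc | hcb
  · linarith [Real.sqrt_nonneg Δ]
  · linarith [Real.le_sqrt_of_sq_le (h hcb)]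

theorem sub_sqrt_lt_of_sq_lt {b c Δ : ℝ} (hΔ : 0 < Δ) (h : c < b → (b - c) ^ 2 < Δ) :
    b - √Δ < c := by
  rcases le_or_gt b c with hbc | hcb
  · linarith [Real.sqrt_pos.mpr hΔ]
  · linarith [Real.lt_sqrt_of_sq_lt (h hcb)]

theorem discr_sub_sq_eq {ι : Type*} [Fintype ι] (ρ m : ℝ) (x : ι → ℝ) :
    ((ρ / 2) * ∑ i, x i ^ 2 + Fintype.card ι) ^ 2 - 2 * ρ * (∑ i, x i) ^ 2
      - ((ρ / 2) * ∑ i, x i ^ 2 + Fintype.card ι - ρ * (∑ i, x i) * m) ^ 2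
      = ρ * (∑ i, x i) * ∑ i, (m - x i) * (2 - ρ * m * x i) := by
  have hE : ∑ i, (m - x i) * (2 - ρ * m * x i)
      = ∑ i, (2 * m - (2 + ρ * m ^ 2) * x i + ρ * m * x i ^ 2) :=
    sum_congr rfl fun i _ => by ring
  simp only [hE, sum_add_distrib, sum_sub_distrib, ← mul_sum, sum_const, card_univ,
    nsmul_eq_mul]
  ring

theorem monovary_sub_sub_mul {ι : Type*} {x : ι → ℝ} (a b : ℝ) {k : ℝ} (hk : 0 ≤ k) :
    Monovary (fun i => a - x i) (fun i => b - k * x i) := by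
  intro i j hij
  have : x j < x i := lt_of_not_ge fun h => hij.not_ge (by dsimp; nlinarith)
  dsimp
  linarith

section

variable {ι : Type*} [Fintype ι] {ρ m : ℝ} {x : ι → ℝ}

theorem sum_sq_le_sum_mul_of_le (hx : ∀ i, 0 ≤ x i) (hm : ∀ i, x i ≤ m) :
    ∑ i, x i ^ 2 ≤ (∑ i, x i) * m := by
  rw [sum_mul]
  exact sum_le_sum fun i _ => by rw [sq]; exact mul_le_mul_of_nonneg_left (hm i) (hx i)

theorem sum_two_sub_mul_pos (hρ : 0 ≤ ρ) (hx : ∀ i, 0 ≤ x i) (hm : ∀ i, x i ≤ m)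
    (h : ρ * (∑ i, x i) * m < (ρ / 2) * ∑ i, x i ^ 2 + Fintype.card ι) :
    0 < ∑ i, (2 - ρ * m * x i) := by
  simp only [sum_sub_distrib, ← mul_sum, sum_const, card_univ, nsmul_eq_mul]
  nlinarith [sum_sq_le_sum_mul_of_le hx hm]

theorem sub_sqrt_discr_le (hρ : 0 ≤ ρ) (hx : ∀ i, 0 ≤ x i) (hm : ∀ i, x i ≤ m) :
    (ρ / 2) * ∑ i, x i ^ 2 + Fintype.card ι
      - √(((ρ / 2) * ∑ i, x i ^ 2 + Fintype.card ι) ^ 2 - 2 * ρ * (∑ i, x i) ^ 2)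
      ≤ ρ * (∑ i, x i) * m := by
  refine sub_sqrt_le_of_sq_le fun hcb => ?_
  have hG := sum_two_sub_mul_pos hρ hx hm hcb
  obtain ⟨i, -, -⟩ := exists_ne_zero_of_sum_ne_zero hG.ne'
  have hE := (monovary_sub_sub_mul m 2 (mul_nonneg hρ ((hx i).trans (hm i)))).sum_mul_nonneg
    (sum_nonneg fun i _ => sub_nonneg.mpr (hm i)) hG.le
  have hS : 0 ≤ ∑ i, x i := sum_nonneg fun i _ => hx i
  nlinarith [discr_sub_sq_eq ρ m x, mul_nonneg (mul_nonneg hρ hS) hE]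

theorem sub_sqrt_discr_lt (hρ : 0 < ρ) (hx : ∀ i, 0 ≤ x i) (hm : ∀ i, x i ≤ m)
    (hnc : ∀ c : ℝ, x ≠ fun _ => c) :
    (ρ / 2) * ∑ i, x i ^ 2 + Fintype.card ι
      - √(((ρ / 2) * ∑ i, x i ^ 2 + Fintype.card ι) ^ 2 - 2 * ρ * (∑ i, x i) ^ 2)
      < ρ * (∑ i, x i) * m := by
  obtain ⟨i₀, hi₀⟩ := Function.ne_iff.mp (hnc m)
  obtain ⟨j₀, hj₀⟩ := Function.ne_iff.mp (hnc 0)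
  have hS : 0 < ∑ i, x i :=
    sum_pos' (fun i _ => hx i) ⟨j₀, mem_univ _, (hx j₀).lt_of_ne' hj₀⟩
  have hΔ : 0 < ((ρ / 2) * ∑ i, x i ^ 2 + Fintype.card ι) ^ 2 - 2 * ρ * (∑ i, x i) ^ 2 := by
    nlinarith [sq_nonneg ((ρ / 2) * ∑ i, x i ^ 2 - Fintype.card ι),
      mul_lt_mul_of_pos_left (sq_sum_lt_card_mul_sum_sq hnc) hρ]
  refine sub_sqrt_lt_of_sq_lt hΔ fun hcb => ?_
  have hG := sum_two_sub_mul_pos hρ.le hx hm hcb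
  have hM : 0 < ∑ i, (m - x i) :=
    sum_pos' (fun i _ => sub_nonneg.mpr (hm i))
      ⟨i₀, mem_univ _, sub_pos.mpr ((hm i₀).lt_of_ne hi₀)⟩
  have hE := (monovary_sub_sub_mul m 2
    (mul_nonneg hρ.le ((hx i₀).trans (hm i₀)))).sum_mul_pos hM hG
  nlinarith [discr_sub_sq_eq ρ m x, mul_pos (mul_pos hρ hS) hE]

end

theorem stmt_7 {n : ℕ} (hn : 0 < n) (ρ : ℝ) (hρ : 0 < ρ)
    (x : Fin n → ℝ) (hdesc : ∀ i j : Fin n, i ≤ j → x j ≤ x i)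
    (hnonneg : ∀ i, 0 ≤ x i) (hx0 : x ≠ 0)
    (Δ αlo : ℝ)
    (hΔ : Δ = ((ρ / 2) * (∑ i, (x i) ^ 2) + n) ^ 2 - 2 * ρ * (∑ i, |x i|) ^ 2)
    (hαlo : αlo = ((ρ / 2) * (∑ i, (x i) ^ 2) + n) - Real.sqrt Δ) :
    0 ≤ x ⟨0, hn⟩ - αlo / (ρ * ∑ i, |x i|) ∧
    ((∀ c : ℝ, x ≠ fun _ => c) → 0 < x ⟨0, hn⟩ - αlo / (ρ * ∑ i, |x i|)) := by
  have hmax : ∀ i, x i ≤ x ⟨0, hn⟩ := fun i => hdesc _ i (Nat.zero_le i.val)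
  obtain ⟨j, hj⟩ := Function.ne_iff.mp hx0
  have hS : 0 < ρ * ∑ i, x i :=
    mul_pos hρ (sum_pos' (fun i _ => hnonneg i) ⟨j, mem_univ _, (hnonneg j).lt_of_ne' hj⟩)
  simp only [abs_of_nonneg (hnonneg _)] at hΔ ⊢
  have hle := sub_sqrt_discr_le hρ.le hnonneg hmax
  have hlt := sub_sqrt_discr_lt hρ hnonneg hmax
  rw [Fintype.card_fin, ← hΔ, ← hαlo] at hle hlt
  rw [sub_nonneg, sub_pos, div_le_iff₀ hS, div_lt_iff₀ hS, mul_comm]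
  exact ⟨hle, hlt⟩
end

section
/- Let ρ > 0, x ∈ ℝⁿ₊, and A = −ρxx^⊤, and consider the problem min{½wᵀAw + eᵀw : w ∈ ℝⁿ, ‖w‖₂ = 1}. A unit vector w* is a global solution of this problem if and only if there exists a real number λ* > ρ‖x‖₂² such that (A + λ*I)w* = −e. Moreover, such a λ* is unique. -/
/-!
Write `q(w) = -(ρ/2)(xᵀw)² + eᵀw` for the objective. If `(λI - ρxxᵀ)u = -e`, then for `‖w‖ = ‖u‖`
we have `q(w) - q(u) = ½ (w - u)ᵀ(λI - ρxxᵀ)(w - u)`, and by Cauchy–Schwarz this is positive for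
`w ≠ u` once `λ > ρ‖x‖²`. So such a unit `u` is the unique global minimiser, which gives the
sufficiency and, since `u ≠ 0`, the uniqueness of `λ`. For necessity it remains to produce one such
pair `(λ, u)`: since `x ≥ 0` gives `(eᵀx)² ≥ ‖x‖²`, the secular equation `‖(λI - ρxxᵀ)⁻¹e‖ = 1`,
written in `t = λ - ρ‖x‖² > 0` and cleared of denominators, is a polynomial equation whose sign
changes on `[1/2, ∞)`.
-/

open Matrix

lemma exists_pos_root_of_le {μ a b N : ℝ} (hμ : 0 ≤ μ) (ha : μ ^ 2 ≤ a) (hb : μ ≤ b)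
    (hN : 1 ≤ N) : ∃ t > 0, a + 2 * b * t + N * t ^ 2 = t ^ 2 * (t + μ) ^ 2 := by
  set p : ℝ → ℝ := fun t => a + 2 * b * t + N * t ^ 2 - t ^ 2 * (t + μ) ^ 2
  set B := a + 2 * b + N + 1
  have hB : 1 ≤ B := by nlinarith
  -- `p (1/2) ≥ μ² + μ + 1/4 - (μ + 1/2)² / 4`
  have hp_half : 0 < p (1 / 2) := by simp only [p]; nlinarith
  have hp_B : p B < 0 := by
    have hB_sq : B ≤ B ^ 2 := by nlinarith
    have hlower : a + 2 * b * B + N * B ^ 2 ≤ (B - 1) * B ^ 2 := by nlinarith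
    have hupper : B ^ 2 * B ^ 2 ≤ B ^ 2 * (B + μ) ^ 2 := by gcongr; linarith
    simp only [p]; nlinarith
  obtain ⟨t, ht, hpt⟩ : ∃ t ∈ Set.Icc (1 / 2) B, p t = 0 :=
    intermediate_value_Icc' (by linarith) (by fun_prop) ⟨hp_B.le, hp_half.le⟩
  exact ⟨t, by linarith [ht.1], by linarith [hpt]⟩

variable {ι : Type*} [Fintype ι]

lemma sum_sq_eq_dotProduct_self (v : ι → ℝ) : ∑ i, v i ^ 2 = v ⬝ᵥ v := by
  simp [dotProduct, sq]

lemma sq_dotProduct_le (x y : ι → ℝ) : (x ⬝ᵥ y) ^ 2 ≤ (x ⬝ᵥ x) * (y ⬝ᵥ y) := by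
  simpa [dotProduct, sq] using Finset.sum_mul_sq_le_sq_mul_sq Finset.univ x y

noncomputable def rankOneObjective (ρ : ℝ) (x w : ι → ℝ) : ℝ :=
  -(ρ / 2) * (x ⬝ᵥ w) ^ 2 + ∑ i, w i

section RankOne

variable {ρ lam : ℝ} {x u w : ι → ℝ} {A : Matrix ι ι ℝ}

lemma sum_sum_mul_eq_of_rankOne (hA : ∀ i j, A i j = -(ρ * x i * x j)) (w : ι → ℝ) :
    ∑ i, ∑ j, A i j * w i * w j = -(ρ * (x ⬝ᵥ w) ^ 2) := by
  simp only [hA, dotProduct, sq, Finset.sum_mul, Finset.mul_sum, ← Finset.sum_neg_distrib]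
  exact Finset.sum_congr rfl fun i _ => Finset.sum_congr rfl fun j _ => by ring

lemma mulVec_add_smul_one_of_rankOne [DecidableEq ι] (hA : ∀ i j, A i j = -(ρ * x i * x j))
    (lam : ℝ) (w : ι → ℝ) : (A + lam • 1) *ᵥ w = lam • w - (ρ * (x ⬝ᵥ w)) • x := by
  obtain rfl : A = -(ρ • vecMulVec x x) := by ext i j; simp [hA, vecMulVec, mul_assoc]
  rw [add_mulVec, neg_mulVec, smul_mulVec, vecMulVec_mulVec, smul_mulVec, one_mulVec,
    op_smul_eq_smul]
  module

lemma sum_eq_of_stationary (hu : lam • u - (ρ * (x ⬝ᵥ u)) • x = -1) (v : ι → ℝ) :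
    ∑ i, v i = ρ * (x ⬝ᵥ u) * (x ⬝ᵥ v) - lam * (u ⬝ᵥ v) := by
  have h := congrArg (v ⬝ᵥ ·) hu
  simp only [dotProduct_sub, dotProduct_smul, dotProduct_neg, dotProduct_one, smul_eq_mul] at h
  rw [dotProduct_comm v u, dotProduct_comm v x] at h
  linarith

lemma rankOneObjective_sub_of_stationary (hu : lam • u - (ρ * (x ⬝ᵥ u)) • x = -1)
    (hw : w ⬝ᵥ w = u ⬝ᵥ u) :
    rankOneObjective ρ x w - rankOneObjective ρ x u =
      (lam * ((w - u) ⬝ᵥ (w - u)) - ρ * (x ⬝ᵥ (w - u)) ^ 2) / 2 := by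
  simp only [rankOneObjective, sum_eq_of_stationary hu, sub_dotProduct, dotProduct_sub,
    dotProduct_comm w u]
  linear_combination (-lam / 2) * hw

lemma rankOne_quadForm_pos (hρ : 0 ≤ ρ) (hlam : ρ * (x ⬝ᵥ x) < lam) {d : ι → ℝ} (hd : d ≠ 0) :
    0 < lam * (d ⬝ᵥ d) - ρ * (x ⬝ᵥ d) ^ 2 := by
  have hdd : 0 < d ⬝ᵥ d := by simpa using dotProduct_star_self_pos_iff.2 hd
  have hcs : ρ * (x ⬝ᵥ d) ^ 2 ≤ ρ * (x ⬝ᵥ x) * (d ⬝ᵥ d) := by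
    rw [mul_assoc]; exact mul_le_mul_of_nonneg_left (sq_dotProduct_le x d) hρ
  linarith [mul_lt_mul_of_pos_right hlam hdd]

lemma rankOneObjective_lt_of_stationary (hρ : 0 ≤ ρ) (hlam : ρ * (x ⬝ᵥ x) < lam)
    (hu : lam • u - (ρ * (x ⬝ᵥ u)) • x = -1) (hw : w ⬝ᵥ w = u ⬝ᵥ u) (hne : w ≠ u) :
    rankOneObjective ρ x u < rankOneObjective ρ x w := by
  have hdiff := rankOneObjective_sub_of_stationary hu hw
  have hpos := rankOne_quadForm_pos hρ hlam (sub_ne_zero.2 hne)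
  linarith

lemma exists_unit_stationary [Nonempty ι] (hρ : 0 ≤ ρ) (hx : 0 ≤ x) :
    ∃ lam u, ρ * (x ⬝ᵥ x) < lam ∧ u ⬝ᵥ u = 1 ∧ lam • u - (ρ * (x ⬝ᵥ u)) • x = -1 := by
  set X := x ⬝ᵥ x
  set σ := x ⬝ᵥ 1
  have hX : 0 ≤ X := dotProduct_nonneg_of_nonneg hx hx
  have hXσ : X ≤ σ ^ 2 := by
    simpa [X, σ, dotProduct, sq] using
      Finset.sum_sq_le_sq_sum_of_nonneg (s := Finset.univ) fun i _ => hx i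
  have hN : (1 : ℝ) ≤ Fintype.card ι := by exact_mod_cast Fintype.card_pos
  obtain ⟨t, ht, hroot⟩ := exists_pos_root_of_le (mul_nonneg hρ hX)
    (a := ρ ^ 2 * X * σ ^ 2) (b := ρ * σ ^ 2)
    (by nlinarith [mul_le_mul_of_nonneg_left hXσ (by positivity : 0 ≤ ρ ^ 2 * X)])
    (mul_le_mul_of_nonneg_left hXσ hρ) hN
  set lam := t + ρ * X
  have hlam : 0 < lam := by positivity
  -- `u = λ⁻¹ (ρ s x - e)`, where `s = xᵀu` is forced by `s (λ - ρ‖x‖²) = -eᵀx`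
  set s := -σ / t
  have hst : s * t = -σ := div_mul_cancel₀ _ ht.ne'
  set u := lam⁻¹ • ((ρ * s) • x - 1)
  have hxu : x ⬝ᵥ u = s := by
    simp only [u, dotProduct_smul, dotProduct_sub, smul_eq_mul]
    field_simp
    linear_combination (-1) * hst
  refine ⟨lam, u, by linarith, ?_, ?_⟩
  · simp only [u, dotProduct_smul, smul_dotProduct, dotProduct_sub, sub_dotProduct, smul_eq_mul,
      one_dotProduct_one]
    rw [dotProduct_comm 1 x]
    field_simp
    refine mul_left_cancel₀ (pow_ne_zero 2 ht.ne') ?_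
    linear_combination hroot + (ρ ^ 2 * X * (s * t - σ) - 2 * ρ * σ * t) * hst
  · rw [hxu, smul_smul, mul_inv_cancel₀ hlam.ne', one_smul, sub_sub_cancel_left]

end RankOne

theorem stmt_12 {n : ℕ} (ρ : ℝ) (hρ : 0 < ρ)
    (x : Fin n → ℝ) (hx : ∀ i, 0 ≤ x i)
    (A : Matrix (Fin n) (Fin n) ℝ) (hA : ∀ i j, A i j = -(ρ * x i * x j))
    (ws : Fin n → ℝ) (hws : ∑ i, (ws i) ^ 2 = 1) :
    ((∀ w : Fin n → ℝ, (∑ i, (w i) ^ 2 = 1) →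
        (1 / 2) * (∑ i, ∑ j, A i j * ws i * ws j) + (∑ i, ws i) ≤
          (1 / 2) * (∑ i, ∑ j, A i j * w i * w j) + (∑ i, w i)) ↔
      ∃ lam : ℝ, ρ * (∑ i, (x i) ^ 2) < lam ∧
        (A + lam • (1 : Matrix (Fin n) (Fin n) ℝ)).mulVec ws = fun _ => -1) ∧
    (∀ lam₁ lam₂ : ℝ,
      ρ * (∑ i, (x i) ^ 2) < lam₁ →
      (A + lam₁ • (1 : Matrix (Fin n) (Fin n) ℝ)).mulVec ws = (fun _ => -1) →
      ρ * (∑ i, (x i) ^ 2) < lam₂ →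
      (A + lam₂ • (1 : Matrix (Fin n) (Fin n) ℝ)).mulVec ws = (fun _ => -1) →
      lam₁ = lam₂) := by
  have hobj (w : Fin n → ℝ) :
      (1 / 2) * (∑ i, ∑ j, A i j * w i * w j) + ∑ i, w i = rankOneObjective ρ x w := by
    rw [sum_sum_mul_eq_of_rankOne hA, rankOneObjective]; ring
  simp only [hobj, sum_sq_eq_dotProduct_self, mulVec_add_smul_one_of_rankOne hA] at hws ⊢
  have hws0 : ws ≠ 0 := by rintro rfl; simp at hws
  refine ⟨⟨fun hmin => ?_, fun ⟨lam, hlam, hws_stat⟩ w hw => ?_⟩, ?_⟩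
  · obtain ⟨i, -⟩ := Function.ne_iff.mp hws0
    have : Nonempty (Fin n) := ⟨i⟩
    obtain ⟨lam, u, hlam, hu, hu_stat⟩ := exists_unit_stationary hρ.le hx
    obtain rfl : ws = u := by
      by_contra hne
      exact not_lt_of_ge (hmin u hu)
        (rankOneObjective_lt_of_stationary hρ.le hlam hu_stat (hws.trans hu.symm) hne)
    exact ⟨lam, hlam, hu_stat⟩
  · rcases eq_or_ne w ws with rfl | hne
    · exact le_rfl
    · exact (rankOneObjective_lt_of_stationary hρ.le hlam hws_stat (hw.trans hws.symm) hne).le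
  · intro lam₁ lam₂ _ h₁ _ h₂
    exact smul_left_injective ℝ hws0 (sub_left_injective (h₁.trans h₂.symm))
end

section
/- Let ρ > 0 and define the sets S₁ = {x ∈ ℝ²_↓ : x₁ > √(2/ρ)} and S₂ = {x ∈ ℝ²_↓ : x₁ > 0 and, with κ = x₂/x₁ ∈ [0,1], x₁ > √(2(1+κ)/(ρ(1+κ²)^{3/2}))}. Then for every x ∈ S₁ ∪ S₂, the zero vector does not belong to prox_{(1/ρ)h₁}(x). -/
-- `h₁(x) = ‖x‖₁/‖x‖₂` for `x ≠ 0`, and `h₁(0) = 0`.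
open Classical in
noncomputable def h1 {n : ℕ} (x : Fin n → ℝ) : ℝ :=
  if x = 0 then 0 else l1norm x / l2norm x

/-
If `0` were a minimizer, its objective value `(ρ/2)‖x‖₂²` would be at most that of every
competitor `v`. On `S₁` the competitor `(x₁, 0)`, where `h₁ = 1`, does strictly better. On `S₂`
the competitor `x` itself does: `h₁(x) < (ρ/2)‖x‖₂²` means `2‖x‖₁ < ρ‖x‖₂³`, and after
factoring `x₁` out of both norms this is the inequality defining `S₂`.
-/

open Finset

lemma notMem_proxSet_of_lt {n : ℕ} {ρ : ℝ} {f : (Fin n → ℝ) → ℝ} {z u : Fin n → ℝ}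
    (v : Fin n → ℝ)
    (h : ρ / 2 * ∑ i, (v i - z i) ^ 2 + f v < ρ / 2 * ∑ i, (u i - z i) ^ 2 + f u) :
    u ∉ proxSet ρ f z :=
  fun hu => (hu v).not_gt h

lemma l1norm_nonneg {n : ℕ} (x : Fin n → ℝ) : 0 ≤ l1norm x :=
  sum_nonneg fun i _ => abs_nonneg (x i)

lemma sum_sq_eq_l2norm_sq {n : ℕ} (x : Fin n → ℝ) : ∑ i, x i ^ 2 = l2norm x ^ 2 :=
  (Real.sq_sqrt (by positivity)).symm

lemma h1_eq_div {n : ℕ} (x : Fin n → ℝ) : h1 x = l1norm x / l2norm x := by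
  unfold h1
  split_ifs with hx
  · simp [hx, l1norm]
  · rfl

lemma h1_single {n : ℕ} (i : Fin n) {a : ℝ} (ha : a ≠ 0) : h1 (Pi.single i a) = 1 := by
  have hl1 : l1norm (Pi.single i a) = |a| := by
    simp [l1norm, Pi.single_apply, apply_ite]
  have hl2 : l2norm (Pi.single i a) = |a| := by
    simp [l2norm, Pi.single_apply, Real.sqrt_sq_eq_abs]
  rw [h1_eq_div, hl1, hl2, div_self (abs_ne_zero.mpr ha)]

lemma sum_sq_single_sub {n : ℕ} (z : Fin n → ℝ) (i : Fin n) :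
    ∑ j, ((Pi.single i (z i) : Fin n → ℝ) j - z j) ^ 2 = l2norm z ^ 2 - z i ^ 2 := by
  have hterm : ∀ j, ((Pi.single i (z i) : Fin n → ℝ) j - z j) ^ 2 =
      z j ^ 2 - (Pi.single i (z i ^ 2) : Fin n → ℝ) j := by
    intro j
    rcases eq_or_ne j i with rfl | hj
    · simp
    · simp [hj]
  simp [hterm, sum_sub_distrib, sum_sq_eq_l2norm_sq]

lemma h1_zero {n : ℕ} : h1 (0 : Fin n → ℝ) = 0 := if_pos rfl

lemma sum_sq_zero_sub {n : ℕ} (z : Fin n → ℝ) :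
    ∑ i, ((0 : Fin n → ℝ) i - z i) ^ 2 = l2norm z ^ 2 := by
  simp [sum_sq_eq_l2norm_sq]

lemma zero_notMem_proxSet_h1_of_one_lt {n : ℕ} {ρ : ℝ} {z : Fin n → ℝ} (i : Fin n)
    (h : 1 < ρ / 2 * z i ^ 2) : (0 : Fin n → ℝ) ∉ proxSet ρ h1 z := by
  have hzi : z i ≠ 0 := by rintro hzi; norm_num [hzi] at h
  refine notMem_proxSet_of_lt (Pi.single i (z i)) ?_
  rw [sum_sq_single_sub, h1_single i hzi, sum_sq_zero_sub, h1_zero]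
  linarith

lemma zero_notMem_proxSet_h1_of_lt {n : ℕ} {ρ : ℝ} {z : Fin n → ℝ}
    (h : 2 * l1norm z < ρ * l2norm z ^ 3) : (0 : Fin n → ℝ) ∉ proxSet ρ h1 z := by
  have hl2 : 0 < l2norm z := by
    refine (Real.sqrt_nonneg _).lt_of_ne' fun h0 => ?_
    rw [l2norm, h0] at h
    linarith [l1norm_nonneg z]
  refine notMem_proxSet_of_lt z ?_
  simp only [sub_self, zero_pow two_ne_zero, sum_const_zero, mul_zero, zero_add]
  rw [sum_sq_zero_sub, h1_zero, add_zero, h1_eq_div, div_lt_iff₀ hl2]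
  linarith

lemma one_lt_half_mul_sq_of_sqrt_lt {ρ a : ℝ} (hρ : 0 < ρ) (h : √(2 / ρ) < a) :
    1 < ρ / 2 * a ^ 2 := by
  have ha : 0 < a := (Real.sqrt_nonneg _).trans_lt h
  rw [Real.sqrt_lt' ha, div_lt_iff₀ hρ] at h
  linarith

lemma rpow_three_halves {t : ℝ} (ht : 0 ≤ t) : t ^ ((3 : ℝ) / 2) = √t ^ 3 := by
  rw [Real.sqrt_eq_rpow, ← Real.rpow_natCast, ← Real.rpow_mul ht]
  norm_num

lemma l2norm_fin_two {x : Fin 2 → ℝ} (ha : 0 < x 0) :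
    l2norm x = x 0 * √(1 + (x 1 / x 0) ^ 2) := by
  rw [l2norm, Fin.sum_univ_two, ← Real.sqrt_sq ha.le, ← Real.sqrt_mul (sq_nonneg _),
    Real.sqrt_sq ha.le]
  congr 1
  field_simp

lemma two_mul_l1norm_lt_of_sqrt_lt {ρ : ℝ} (hρ : 0 < ρ) {x : Fin 2 → ℝ} (hx1 : 0 ≤ x 1)
    (hx0 : 0 < x 0)
    (h : √(2 * (1 + x 1 / x 0) / (ρ * (1 + (x 1 / x 0) ^ 2) ^ ((3 : ℝ) / 2))) < x 0) :
    2 * l1norm x < ρ * l2norm x ^ 3 := by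
  set κ := x 1 / x 0
  have hx1_eq : x 1 = κ * x 0 := (div_mul_cancel₀ _ hx0.ne').symm
  have hl1 : l1norm x = x 0 * (1 + κ) := by
    rw [l1norm, Fin.sum_univ_two, abs_of_pos hx0, abs_of_nonneg hx1, hx1_eq]
    ring
  rw [rpow_three_halves (by positivity), Real.sqrt_lt' hx0,
    div_lt_iff₀ (by positivity)] at h
  rw [hl1, l2norm_fin_two hx0]
  calc 2 * (x 0 * (1 + κ)) = x 0 * (2 * (1 + κ)) := by ring
    _ < x 0 * (x 0 ^ 2 * (ρ * √(1 + κ ^ 2) ^ 3)) := mul_lt_mul_of_pos_left h hx0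
    _ = ρ * (x 0 * √(1 + κ ^ 2)) ^ 3 := by ring

theorem stmt_15_general (ρ : ℝ) (hρ : 0 < ρ) (x : Fin 2 → ℝ)
    (hx1 : 0 ≤ x 1)
    (hS : Real.sqrt (2 / ρ) < x 0 ∨
      (0 < x 0 ∧
        Real.sqrt (2 * (1 + x 1 / x 0) /
          (ρ * (1 + (x 1 / x 0) ^ 2) ^ ((3 : ℝ) / 2))) < x 0)) :
    (0 : Fin 2 → ℝ) ∉ proxSet ρ h1 x := by
  rcases hS with hS₁ | ⟨hx0, hS₂⟩
  · exact zero_notMem_proxSet_h1_of_one_lt 0 (one_lt_half_mul_sq_of_sqrt_lt hρ hS₁)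
  · exact zero_notMem_proxSet_h1_of_lt (two_mul_l1norm_lt_of_sqrt_lt hρ hx1 hx0 hS₂)

theorem stmt_15 (ρ : ℝ) (hρ : 0 < ρ) (x : Fin 2 → ℝ)
    (hx1 : 0 ≤ x 1) (hx2 : x 1 ≤ x 0)
    (hS : Real.sqrt (2 / ρ) < x 0 ∨
      (0 < x 0 ∧
        Real.sqrt (2 * (1 + x 1 / x 0) /
          (ρ * (1 + (x 1 / x 0) ^ 2) ^ ((3 : ℝ) / 2))) < x 0)) :
    (0 : Fin 2 → ℝ) ∉ proxSet ρ h1 x :=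
  stmt_15_general ρ hρ x hx1 hS
end

section
/- Let ρ > 0, α > 0, and x = αe₁ = (α, 0) ∈ ℝ². Then prox_{(1/ρ)h₁}(x) = {0} if α < √(2/ρ); prox_{(1/ρ)h₁}(x) = {0, x} if α = √(2/ρ); and prox_{(1/ρ)h₁}(x) = {x} if α > √(2/ρ). -/
/-! The ratio `h₁` is at least `1` away from the origin, with equality at `α e₁`; the quadratic
term vanishes only at the prox point itself. Hence every `u ∉ {0, x}` has objective value
`> 1 = F(x)`, so the minimizers lie in `{0, x}`, and which of them wins is decided by comparing
`F(0) = ρα²/2` with `1`. -/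

section Minimizers

variable {X : Type*} {F : X → ℝ} {a b : X}

theorem setOf_forall_le_eq_singleton_of_lt (h : ∀ u, u ≠ a → u ≠ b → min (F a) (F b) < F u)
    (hab : F a < F b) : {u | ∀ v, F u ≤ F v} = {a} := by
  rw [min_eq_left hab.le] at h
  have hmin : ∀ v, F a ≤ F v := fun v => by
    by_cases hva : v = a
    · rw [hva]
    by_cases hvb : v = b
    · rw [hvb]; exact hab.le
    · exact (h v hva hvb).le
  ext u
  refine ⟨fun hu => ?_, fun hu => hu ▸ hmin⟩
  by_contra hua
  have hub : u ≠ b := by rintro rfl; exact (hu a).not_gt hab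
  exact (hu a).not_gt (h u hua hub)

theorem setOf_forall_le_eq_pair_of_eq (h : ∀ u, u ≠ a → u ≠ b → min (F a) (F b) < F u)
    (hab : F a = F b) : {u | ∀ v, F u ≤ F v} = {a, b} := by
  rw [← hab, min_self] at h
  have hmin : ∀ v, F a ≤ F v := fun v => by
    by_cases hva : v = a
    · rw [hva]
    by_cases hvb : v = b
    · rw [hvb, hab]
    · exact (h v hva hvb).le
  ext u
  refine ⟨fun hu => ?_, ?_⟩
  · by_contra hu'
    simp only [Set.mem_insert_iff, Set.mem_singleton_iff, not_or] at hu'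
    exact (hu a).not_gt (h u hu'.1 hu'.2)
  · rintro (rfl | rfl)
    · exact hmin
    · exact fun v => hab ▸ hmin v

end Minimizers

theorem sum_sq_pos_of_ne_zero {n : ℕ} {x : Fin n → ℝ} (hx : x ≠ 0) : 0 < ∑ i, x i ^ 2 := by
  obtain ⟨i, hi⟩ := Function.ne_iff.1 hx
  exact Finset.sum_pos' (fun j _ => sq_nonneg (x j)) ⟨i, Finset.mem_univ i, sq_pos_of_ne_zero hi⟩

theorem l2norm_le_l1norm {n : ℕ} (x : Fin n → ℝ) : l2norm x ≤ l1norm x := by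
  have hsq : ∑ i, x i ^ 2 ≤ (∑ i, |x i|) ^ 2 := by
    simpa only [sq_abs] using
      Finset.sum_sq_le_sq_sum_of_nonneg (s := Finset.univ) fun i _ => abs_nonneg (x i)
  exact Real.sqrt_le_iff.2 ⟨Finset.sum_nonneg fun i _ => abs_nonneg (x i), hsq⟩

theorem one_le_h1 {n : ℕ} {x : Fin n → ℝ} (hx : x ≠ 0) : 1 ≤ h1 x := by
  have hpos : 0 < l2norm x := Real.sqrt_pos.2 (sum_sq_pos_of_ne_zero hx)
  rw [h1, if_neg hx, le_div_iff₀ hpos, one_mul]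
  exact l2norm_le_l1norm x

theorem h1_smul_e1 {α : ℝ} (hα : 0 < α) : h1 ![α, 0] = 1 := by
  have hx : ![α, 0] ≠ 0 := fun h => hα.ne' (by simpa using congrFun h 0)
  rw [h1, if_neg hx, l1norm, l2norm]
  simp [abs_of_pos hα, Real.sqrt_sq hα.le, hα.ne']

theorem one_lt_prox_objective {n : ℕ} {ρ : ℝ} (hρ : 0 < ρ) {z u : Fin n → ℝ} (hu : u ≠ 0)
    (huz : u ≠ z) : 1 < ρ / 2 * ∑ i, (u i - z i) ^ 2 + h1 u := by
  have hdist : 0 < ∑ i, (u i - z i) ^ 2 := sum_sq_pos_of_ne_zero (sub_ne_zero.2 huz)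
  have := one_le_h1 hu
  nlinarith

theorem half_mul_sq_lt_one_iff {ρ α : ℝ} (hρ : 0 < ρ) (hα : 0 ≤ α) :
    ρ / 2 * α ^ 2 < 1 ↔ α < Real.sqrt (2 / ρ) := by
  rw [Real.lt_sqrt hα, lt_div_iff₀ hρ]
  constructor <;> intro h <;> linarith

theorem one_lt_half_mul_sq_iff {ρ α : ℝ} (hρ : 0 < ρ) (hα : 0 < α) :
    1 < ρ / 2 * α ^ 2 ↔ Real.sqrt (2 / ρ) < α := by
  rw [Real.sqrt_lt' hα, div_lt_iff₀ hρ]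
  constructor <;> intro h <;> linarith

theorem stmt_16 (ρ α : ℝ) (hρ : 0 < ρ) (hα : 0 < α) :
    (α < Real.sqrt (2 / ρ) → proxSet ρ h1 ![α, 0] = {0}) ∧
    (α = Real.sqrt (2 / ρ) → proxSet ρ h1 ![α, 0] = {0, ![α, 0]}) ∧
    (Real.sqrt (2 / ρ) < α → proxSet ρ h1 ![α, 0] = {![α, 0]}) := by
  set x : Fin 2 → ℝ := ![α, 0]
  set F : (Fin 2 → ℝ) → ℝ := fun u => ρ / 2 * ∑ i, (u i - x i) ^ 2 + h1 u
  have hF0 : F 0 = ρ / 2 * α ^ 2 := by simp [F, x, h1]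
  have hFx : F x = 1 := by simp [F, x, h1_smul_e1 hα]
  have hout : ∀ u, u ≠ 0 → u ≠ x → min (F 0) (F x) < F u := fun u hu hux =>
    (min_le_right _ _).trans_lt (hFx ▸ one_lt_prox_objective hρ hu hux)
  rw [show proxSet ρ h1 x = {u | ∀ v, F u ≤ F v} from rfl]
  refine ⟨fun hlt => ?_, fun heq => ?_, fun hgt => ?_⟩
  · refine setOf_forall_le_eq_singleton_of_lt hout ?_
    rw [hF0, hFx, half_mul_sq_lt_one_iff hρ hα.le]
    exact hlt
  · refine setOf_forall_le_eq_pair_of_eq hout ?_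
    rw [hF0, hFx, heq, Real.sq_sqrt (by positivity)]
    field_simp
  · refine setOf_forall_le_eq_singleton_of_lt
      (fun u hux hu => min_comm (F 0) (F x) ▸ hout u hu hux) ?_
    rw [hF0, hFx, one_lt_half_mul_sq_iff hρ hα]
    exact hgt
end
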